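/- arXiv:1404.5665 — 3 statements merged into one kernel-verified Lean document; each statement's English description precedes it below -/
import Mathlib

section
/- (Nelson-Oppen with propositional structure) Let T1 and T2 be stably-infinite theories over disjoint signatures Σ1, Σ2, and let Φi be a quantifier-free Σi-formula for i=1,2. Then Φ1 ∧ Φ2 is (T1 ∪ T2)-satisfiable if and only if there exists an equivalence relation E on the set V of variables shared by Φ1 and Φ2 such that {Φi} ∪ α(V,E) is Ti-satisfiable for i=1,2. -/
open FirstOrder

namespace NelsonOppen

/-- `T`-satisfiability of a set `Γ` of formulas with free variables in `ℕ`: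
there is a model of `T` and a valuation of the variables realizing every
formula of `Γ`. -/
def TSat (L : Language) (T : L.Theory) (Γ : Set (L.Formula ℕ)) : Prop :=
  ∃ (M : Type) (S : L.Structure M) (v : ℕ → M),
    (∀ ψ ∈ T, @FirstOrder.Language.Sentence.Realize L M S ψ) ∧
    (∀ φ ∈ Γ, @FirstOrder.Language.Formula.Realize L M S ℕ φ v)

/-- A theory is stably infinite if every `T`-satisfiable quantifier-free
formula is realized in an infinite model of `T`. -/
def StablyInfinite (L : Language) (T : L.Theory) : Prop :=
  ∀ φ : L.Formula ℕ, φ.IsQF → TSat L T {φ} →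
    ∃ (M : Type) (S : L.Structure M) (v : ℕ → M),
      Infinite M ∧ (∀ ψ ∈ T, @FirstOrder.Language.Sentence.Realize L M S ψ) ∧
      @FirstOrder.Language.Formula.Realize L M S ℕ φ v

/-- The arrangement `α(V, E)` induced by a binary relation `E` on the
variables in `V`: all equalities `x = y` for `x E y` and all disequalities
`x ≠ y` for `x, y ∈ V` not related by `E`. -/
def arrangement (L : Language) (V : Set ℕ) (E : ℕ → ℕ → Prop) :
    Set (L.Formula ℕ) :=
  {φ | ∃ x ∈ V, ∃ y ∈ V,
    (E x y ∧ φ = FirstOrder.Language.Term.equal (L := L) (.var x) (.var y)) ∨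
    (¬ E x y ∧
      φ = (FirstOrder.Language.Term.equal (L := L) (.var x) (.var y)).not)}

/-- `E` is an equivalence relation on the set `V`. -/
def IsEquivOn (V : Set ℕ) (E : ℕ → ℕ → Prop) : Prop :=
  (∀ x ∈ V, E x x) ∧ (∀ x ∈ V, ∀ y ∈ V, E x y → E y x) ∧
  (∀ x ∈ V, ∀ y ∈ V, ∀ z ∈ V, E x y → E y z → E x z)

end NelsonOppen

/-! If `Φᵢ ∪ α(V, E)` is `Tᵢ`-satisfiable, stable infiniteness, applied to `Φᵢ` conjoined with
the finitely many literals of `α(V, E)`, gives an infinite model `Mᵢ` of it. An ultrapower of an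
infinite `M` indexed by `Finset X`, along an ultrafilter finer than `atTop`, is an elementary
extension of cardinality exactly `2 ^ #X` when `#M ≤ #X`; taking `X = M₁ ⊕ M₂` makes the two
models equinumerous. Both valuations induce the equality pattern `E` on the finite set `V`, so a
bijection between the models can be chosen to match the shared variables, and transporting the
`L₂`-structure along it yields one `L₁.sum L₂`-structure satisfying `Φ₁ ∧ Φ₂`. Conversely, the
two reducts of a model of `Φ₁ ∧ Φ₂` witness the arrangement given by the equalities of its
valuation. -/

universe u

open FirstOrder FirstOrder.Language Cardinal Filter

namespace Cardinal

theorem mk_filterProduct_le {I M : Type u} (l : Filter I) :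
    #(l.Product fun _ => M) ≤ #M ^ #I :=
  (power_def M I).symm ▸ mk_quotient_le

theorem two_power_le_mk_filterProduct_of_le_atTop {X M : Type u} [Infinite M]
    {l : Filter (Finset X)} [l.NeBot] (hl : l ≤ atTop) :
    2 ^ #X ≤ #(l.Product fun _ => M) := by
  have hemb (s : Finset X) : Nonempty ((s → Prop) ↪ M) :=
    (Cardinal.le_def _ _).1 ((lt_aleph0_of_finite _).le.trans (aleph0_le_mk M))
  let g (s : Finset X) := (hemb s).some
  -- `A` is sent to the class of `s ↦ g s (A ∩ s)`; since eventually `x ∈ s`, this class determines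
  -- whether `x ∈ A`.
  rw [← mk_set]
  refine mk_le_of_injective
    (f := fun A : Set X => ((fun s => g s fun x => x.1 ∈ A : _) : l.Product _)) ?_
  intro A B hAB
  ext x
  have hev : ∀ᶠ s in l, g s (fun x => x.1 ∈ A) = g s fun x => x.1 ∈ B :=
    Quotient.exact' hAB
  obtain ⟨s, hs, hxs⟩ := (hev.and (hl (eventually_ge_atTop {x}))).exists
  exact Iff.of_eq (congrFun ((g s).injective hs) ⟨x, Finset.singleton_subset_iff.1 hxs⟩)

theorem exists_equiv_apply_eq_of_eq_iff {ι N₁ N₂ : Type*} [Infinite N₁] (h : Nonempty (N₁ ≃ N₂))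
    {V : Set ι} (hV : V.Finite) (w₁ : ι → N₁) (w₂ : ι → N₂)
    (hw : ∀ x ∈ V, ∀ y ∈ V, (w₁ x = w₁ y ↔ w₂ x = w₂ y)) :
    ∃ e : N₁ ≃ N₂, ∀ x ∈ V, e (w₁ x) = w₂ x := by
  let pre (a : w₁ '' V) : ι := a.2.choose
  have hpre (a : w₁ '' V) : pre a ∈ V ∧ w₁ (pre a) = a := a.2.choose_spec
  let f : w₁ '' V ↪ N₂ := ⟨fun a => w₂ (pre a), fun a b hab => Subtype.ext <|
    (hpre a).2.symm.trans <| ((hw _ (hpre a).1 _ (hpre b).1).2 hab).trans (hpre b).2⟩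
  obtain ⟨g, hg⟩ :=
    extend_function_of_lt f ((hV.image w₁).lt_aleph0.trans_le (aleph0_le_mk N₁)) h
  refine ⟨g, fun x hx => (hg ⟨_, x, hx, rfl⟩).trans ?_⟩
  obtain ⟨hV', hw'⟩ := hpre ⟨_, x, hx, rfl⟩
  exact (hw _ hV' x hx).1 hw'

end Cardinal

namespace FirstOrder.Language

variable {L : Language} {α β : Type*}

theorem Formula.realize_congr {M : Type*} [L.Structure M] [DecidableEq α] {φ : L.Formula α} {v v' : α → M}
    (h : ∀ a ∈ φ.freeVarFinset, v a = v' a) : φ.Realize v ↔ φ.Realize v' := by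
  have hv : (fun a : φ.freeVarFinset => v a) = fun a : φ.freeVarFinset => v' a :=
    funext fun a => h a a.2
  rw [Formula.Realize, Formula.Realize,
    ← BoundedFormula.realize_restrictFreeVar (f := id) (v := fun a => v a) v (fun _ => rfl),
    ← BoundedFormula.realize_restrictFreeVar (f := id) (v := fun a => v' a) v' (fun _ => rfl), hv]

theorem BoundedFormula.IsQF.iInf {n : ℕ} [Finite β] {f : β → L.BoundedFormula α n}
    (h : ∀ b, (f b).IsQF) : (BoundedFormula.iInf f).IsQF := by
  suffices ∀ l : List (L.BoundedFormula α n), (∀ φ ∈ l, φ.IsQF) → (l.foldr (· ⊓ ·) ⊤).IsQF by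
    exact this _ (by simp [h])
  intro l hl
  induction l with
  | nil => exact IsQF.top
  | cons φ l ih => exact (hl φ (by simp)).inf (ih fun ψ hψ => hl ψ (by simp [hψ]))

namespace Ultraproduct

variable {I : Type*} (U : Ultrafilter I) (M : Type*) [L.Structure M] [Nonempty M]

def diagonal : M ↪ₑ[L] (U : Filter I).Product fun _ => M where
  toFun m := ((fun _ => m : I → M) : (U : Filter I).Product fun _ => M)
  map_formula' _ φ x := (realize_formula_cast φ fun i _ => x i).trans eventually_const

end Ultraproduct

theorem exists_elementaryEmbedding_mk_eq_two_power (M : Type u) [L.Structure M]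
    [Infinite M] (X : Type u) [Infinite X] (hMX : #M ≤ #X) :
    ∃ (N : Type u) (_ : L.Structure N), #N = 2 ^ #X ∧ Nonempty (M ↪ₑ[L] N) := by
  let U : Ultrafilter (Finset X) := .of atTop
  refine ⟨_, _, le_antisymm ?_ (two_power_le_mk_filterProduct_of_le_atTop (Ultrafilter.of_le _)),
    ⟨Ultraproduct.diagonal U M⟩⟩
  calc #((U : Filter (Finset X)).Product fun _ => M) ≤ #M ^ #(Finset X) := mk_filterProduct_le _
    _ = #M ^ #X := by rw [mk_finset_of_infinite]
    _ ≤ (2 ^ #X) ^ #X := power_le_power_right (hMX.trans (cantor _).le)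
    _ = 2 ^ #X := by rw [← power_mul, mul_eq_self (aleph0_le_mk X)]

end FirstOrder.Language

namespace NelsonOppen

section Arrangement

variable {L : Language} {M : Type*} [L.Structure M]

theorem realize_arrangement_iff {V : Set ℕ} {E : ℕ → ℕ → Prop} {v : ℕ → M} :
    (∀ φ ∈ arrangement L V E, φ.Realize v) ↔ ∀ x ∈ V, ∀ y ∈ V, (v x = v y ↔ E x y) := by
  constructor
  · intro h x hx y hy
    by_cases hE : E x y
    · simpa [hE] using h _ ⟨x, hx, y, hy, .inl ⟨hE, rfl⟩⟩
    · simpa [hE] using h _ ⟨x, hx, y, hy, .inr ⟨hE, rfl⟩⟩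
  · rintro h φ ⟨x, hx, y, hy, ⟨hE, rfl⟩ | ⟨hE, rfl⟩⟩ <;> simp [h x hx y hy, hE]

open Classical in
noncomputable def arrangementFormula (L : Language) (s : Finset ℕ) (E : ℕ → ℕ → Prop) :
    L.Formula ℕ :=
  Formula.iInf fun p : s × s =>
    letI φ : L.Formula ℕ := Term.equal (.var p.1) (.var p.2)
    if E p.1 p.2 then φ else φ.not

theorem isQF_arrangementFormula (s : Finset ℕ) (E : ℕ → ℕ → Prop) :
    (arrangementFormula L s E).IsQF :=
  BoundedFormula.IsQF.iInf fun _ => by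
    split_ifs
    exacts [(BoundedFormula.IsAtomic.equal _ _).isQF, (BoundedFormula.IsAtomic.equal _ _).isQF.not]

theorem realize_arrangementFormula {s : Finset ℕ} {E : ℕ → ℕ → Prop} {v : ℕ → M} :
    (arrangementFormula L s E).Realize v ↔ ∀ x ∈ s, ∀ y ∈ s, (v x = v y ↔ E x y) := by
  simp only [arrangementFormula, Formula.realize_iInf, Prod.forall, Subtype.forall]
  refine forall₂_congr fun x _ => forall₂_congr fun y _ => ?_
  split_ifs with hE <;> simp [hE]

theorem tSat_singleton_union_arrangement_iff {T : L.Theory} {Φ : L.Formula ℕ} {V : Set ℕ}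
    {E : ℕ → ℕ → Prop} :
    TSat L T ({Φ} ∪ arrangement L V E) ↔ ∃ (M : Type) (_ : L.Structure M) (v : ℕ → M),
      M ⊨ T ∧ Φ.Realize v ∧ ∀ x ∈ V, ∀ y ∈ V, (v x = v y ↔ E x y) := by
  simp only [TSat, Set.singleton_union, Set.forall_mem_insert, realize_arrangement_iff,
    Theory.model_iff]

theorem tSat_arrangement_of_realize_onFormula {L' : Language} (φ : L →ᴸ L') {T : L.Theory}
    {Φ : L.Formula ℕ} {M : Type} [L'.Structure M] (hM : M ⊨ φ.onTheory T) {v : ℕ → M}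
    (hΦ : (φ.onFormula Φ).Realize v) (V : Set ℕ) :
    TSat L T ({Φ} ∪ arrangement L V fun x y => v x = v y) := by
  let : L.Structure M := φ.reduct M
  have : φ.IsExpansionOn M := φ.isExpansionOn_reduct M
  exact tSat_singleton_union_arrangement_iff.2 ⟨M, _, v, (φ.onTheory_model T).1 hM,
    (φ.realize_onFormula Φ).1 hΦ, fun _ _ _ _ => Iff.rfl⟩

theorem StablyInfinite.exists_infinite_model {T : L.Theory} (hT : StablyInfinite L T)
    {Φ : L.Formula ℕ} (hΦ : Φ.IsQF) {V : Set ℕ} (hV : V.Finite) {E : ℕ → ℕ → Prop}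
    (h : TSat L T ({Φ} ∪ arrangement L V E)) :
    ∃ (M : Type) (_ : L.Structure M) (v : ℕ → M), Infinite M ∧ M ⊨ T ∧ Φ.Realize v ∧
      ∀ x ∈ V, ∀ y ∈ V, (v x = v y ↔ E x y) := by
  have realize_iff {M : Type} [L.Structure M] {v : ℕ → M} :
      (Φ ⊓ arrangementFormula L hV.toFinset E).Realize v ↔
        Φ.Realize v ∧ ∀ x ∈ V, ∀ y ∈ V, (v x = v y ↔ E x y) := by
    simp [realize_arrangementFormula]
  obtain ⟨M, _, v, hM, hΦv, hEv⟩ := tSat_singleton_union_arrangement_iff.1 h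
  obtain ⟨N, _, w, hN, hNT, hw⟩ := hT _ (hΦ.inf (isQF_arrangementFormula _ _))
    ⟨M, _, v, (Theory.model_iff T).1 hM, by rintro _ rfl; exact realize_iff.2 ⟨hΦv, hEv⟩⟩
  exact ⟨N, _, w, hN, (Theory.model_iff T).2 hNT, realize_iff.1 hw⟩

end Arrangement

section Combination

variable {L₁ L₂ : Language} {T₁ : L₁.Theory} {T₂ : L₂.Theory}
  {Φ₁ : L₁.Formula ℕ} {Φ₂ : L₂.Formula ℕ}

theorem tSat_sum_of_equiv {M₁ M₂ : Type} [L₁.Structure M₁] [L₂.Structure M₂]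
    [M₁ ⊨ T₁] [M₂ ⊨ T₂] {v₁ : ℕ → M₁} {v₂ : ℕ → M₂} (hΦ₁ : Φ₁.Realize v₁)
    (hΦ₂ : Φ₂.Realize v₂) (e : M₁ ≃ M₂)
    (he : ∀ x ∈ (↑Φ₁.freeVarFinset ∩ ↑Φ₂.freeVarFinset : Set ℕ), e (v₁ x) = v₂ x) :
    TSat (L₁.sum L₂) (LHom.sumInl.onTheory T₁ ∪ LHom.sumInr.onTheory T₂)
      {LHom.sumInl.onFormula Φ₁, LHom.sumInr.onFormula Φ₂} := by
  classical
  let : L₂.Structure M₁ := e.symm.inducedStructure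
  let g : M₂ ≃[L₂] M₁ := e.symm.inducedStructureEquiv
  have : M₁ ⊨ T₂ := StrongHomClass.theory_model g
  let v x := if x ∈ Φ₁.freeVarFinset then v₁ x else e.symm (v₂ x)
  refine ⟨M₁, inferInstance, v, (Theory.model_iff _).1 ?_, ?_⟩
  · exact ((LHom.onTheory_model _ _).2 ‹_›).union ((LHom.onTheory_model _ _).2 ‹_›)
  rintro _ (rfl | rfl) <;> rw [LHom.realize_onFormula]
  · exact (Formula.realize_congr fun x hx => by simp [v, hx]).1 hΦ₁
  · refine (Formula.realize_congr fun x hx => ?_).1 ((StrongHomClass.realize_formula g Φ₂).2 hΦ₂)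
    by_cases hx₁ : x ∈ Φ₁.freeVarFinset
    · simp [v, hx₁, g, ← he x ⟨hx₁, hx⟩]
    · simp [v, hx₁, g]

theorem tSat_sum_of_infinite_models {M₁ M₂ : Type} [L₁.Structure M₁] [L₂.Structure M₂]
    [Infinite M₁] [Infinite M₂] [M₁ ⊨ T₁] [M₂ ⊨ T₂] {v₁ : ℕ → M₁} {v₂ : ℕ → M₂}
    (hΦ₁ : Φ₁.Realize v₁) (hΦ₂ : Φ₂.Realize v₂)
    (hv : ∀ x ∈ (↑Φ₁.freeVarFinset ∩ ↑Φ₂.freeVarFinset : Set ℕ),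
      ∀ y ∈ (↑Φ₁.freeVarFinset ∩ ↑Φ₂.freeVarFinset : Set ℕ), (v₁ x = v₁ y ↔ v₂ x = v₂ y)) :
    TSat (L₁.sum L₂) (LHom.sumInl.onTheory T₁ ∪ LHom.sumInr.onTheory T₂)
      {LHom.sumInl.onFormula Φ₁, LHom.sumInr.onFormula Φ₂} := by
  obtain ⟨N₁, _, hN₁, ⟨f₁⟩⟩ := exists_elementaryEmbedding_mk_eq_two_power (L := L₁) M₁ (M₁ ⊕ M₂)
    (mk_le_of_injective Sum.inl_injective)
  obtain ⟨N₂, _, hN₂, ⟨f₂⟩⟩ := exists_elementaryEmbedding_mk_eq_two_power (L := L₂) M₂ (M₁ ⊕ M₂)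
    (mk_le_of_injective Sum.inr_injective)
  have : N₁ ⊨ T₁ := (f₁.theory_model_iff T₁).1 ‹_›
  have : N₂ ⊨ T₂ := (f₂.theory_model_iff T₂).1 ‹_›
  have : Infinite N₁ := .of_injective f₁ f₁.injective
  obtain ⟨e, he⟩ := exists_equiv_apply_eq_of_eq_iff (Cardinal.eq.1 (hN₁.trans hN₂.symm))
    ((Finset.finite_toSet _).inter_of_left _) (f₁ ∘ v₁) (f₂ ∘ v₂) fun x hx y hy => by
      simpa only [Function.comp_apply, f₁.injective.eq_iff, f₂.injective.eq_iff] using hv x hx y hy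
  exact tSat_sum_of_equiv ((f₁.map_formula Φ₁ v₁).2 hΦ₁) ((f₂.map_formula Φ₂ v₂).2 hΦ₂) e he

end Combination

end NelsonOppen

open NelsonOppen in
/-- (Nelson-Oppen with propositional structure.)  Let `T₁`,
`T₂` be stably-infinite theories over disjoint signatures (modeled by the sum
language `L₁.sum L₂`, whose two copies of symbols are disjoint by
construction), and let `Φᵢ` be a quantifier-free `Σᵢ`-formula.  Then
`Φ₁ ∧ Φ₂` is `(T₁ ∪ T₂)`-satisfiable iff there is an equivalence relation `E`
on the set `V` of variables shared by `Φ₁` and `Φ₂` such that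
`{Φᵢ} ∪ α(V,E)` is `Tᵢ`-satisfiable for `i = 1, 2`. -/
theorem nelson_oppen_with_propositional_structure
    (L₁ L₂ : Language) (T₁ : L₁.Theory) (T₂ : L₂.Theory)
    (h₁ : StablyInfinite L₁ T₁) (h₂ : StablyInfinite L₂ T₂)
    (Φ₁ : L₁.Formula ℕ) (Φ₂ : L₂.Formula ℕ)
    (hq₁ : Φ₁.IsQF) (hq₂ : Φ₂.IsQF)
    (V : Set ℕ)
    (hV : V = ↑Φ₁.freeVarFinset ∩ ↑Φ₂.freeVarFinset) :
    TSat (L₁.sum L₂)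
        (Language.LHom.sumInl.onTheory T₁ ∪ Language.LHom.sumInr.onTheory T₂)
        {Language.LHom.sumInl.onFormula Φ₁, Language.LHom.sumInr.onFormula Φ₂} ↔
      ∃ E : ℕ → ℕ → Prop, IsEquivOn V E ∧
        TSat L₁ T₁ ({Φ₁} ∪ arrangement L₁ V E) ∧
        TSat L₂ T₂ ({Φ₂} ∪ arrangement L₂ V E) := by
  constructor
  · rintro ⟨M, _, v, hT, hΦ⟩
    have hM : M ⊨ LHom.sumInl.onTheory T₁ ∪ LHom.sumInr.onTheory T₂ := (Theory.model_iff _).2 hT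
    exact ⟨fun x y => v x = v y,
      ⟨fun _ _ => rfl, fun _ _ _ _ => Eq.symm, fun _ _ _ _ _ _ => Eq.trans⟩,
      tSat_arrangement_of_realize_onFormula _ (hM.mono Set.subset_union_left) (hΦ _ (.inl rfl)) V,
      tSat_arrangement_of_realize_onFormula _ (hM.mono Set.subset_union_right) (hΦ _ (.inr rfl)) V⟩
  · rintro ⟨E, -, hS₁, hS₂⟩
    have hVfin : V.Finite := hV ▸ (Finset.finite_toSet _).inter_of_left _
    obtain ⟨M₁, _, v₁, _, _, hΦ₁, hE₁⟩ := h₁.exists_infinite_model hq₁ hVfin hS₁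
    obtain ⟨M₂, _, v₂, _, _, hΦ₂, hE₂⟩ := h₂.exists_infinite_model hq₂ hVfin hS₂
    subst hV
    exact tSat_sum_of_infinite_models hΦ₁ hΦ₂ fun x hx y hy =>
      (hE₁ x hx y hy).trans (hE₂ x hx y hy).symm
end

section
/- Soundness of membership bounds propagation: suppose integer assignment v satisfies the membership constraint (x1,...,xk) ∈ {y_1,...,y_l} (where y_j = (y_{j,1},...,y_{j,k})) and satisfies lb(z) ≤ v(z) ≤ ub(z) for every variable z. Then for each i, v(x_i) ≥ max(lb(x_i), min{lb(y_{j,i}) : j ∈ [1,l], match(x, y_j)}) and v(x_i) ≤ min(ub(x_i), max{ub(y_{j,i}) : j ∈ [1,l], match(x, y_j)}). -/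
namespace MemProp

/-- `lb z ≤ v z ≤ ub z` for every variable `z` (bounds live in ℤ ∪ {±∞},
modeled as `EReal`). -/
def RespectsBounds (lb ub : ℕ → EReal) (v : ℕ → ℤ) : Prop :=
  ∀ z : ℕ, lb z ≤ ((v z : ℝ) : EReal) ∧ ((v z : ℝ) : EReal) ≤ ub z

/-- every bound is an integer or ±∞ -/
def IntBounds (f : ℕ → EReal) : Prop :=
  ∀ z : ℕ, f z = ⊥ ∨ f z = ⊤ ∨ ∃ n : ℤ, f z = ((n : ℝ) : EReal)

/-- `Match lb ub x y` : for each column `i`, the intervals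
`[lb(x i), ub(x i)]` and `[lb(y i), ub(y i)]` intersect. -/
def Match {k : ℕ} (lb ub : ℕ → EReal) (x y : Fin k → ℕ) : Prop :=
  ∀ i : Fin k, max (lb (x i)) (lb (y i)) ≤ min (ub (x i)) (ub (y i))

/-- the membership constraint `(x₁,...,x_k) ∈ {y₁,...,y_l}` holds under `v` -/
def MemHolds {k l : ℕ} (x : Fin k → ℕ) (y : Fin l → Fin k → ℕ) (v : ℕ → ℤ) : Prop :=
  ∃ j : Fin l, ∀ i : Fin k, v (x i) = v (y j i)

end MemProp

namespace MemProp

theorem RespectsBounds.match {lb ub : ℕ → EReal} {v : ℕ → ℤ} (hv : RespectsBounds lb ub v)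
    {k : ℕ} {x y : Fin k → ℕ} (hxy : ∀ i, v (x i) = v (y i)) : Match lb ub x y := fun i ↦
  have hx := hv (x i)
  have hy := hxy i ▸ hv (y i)
  (max_le hx.1 hy.1).trans (le_min hx.2 hy.2)

end MemProp

theorem membership_bounds_propagation_sound_general
    (k l : ℕ) (x : Fin k → ℕ) (y : Fin l → Fin k → ℕ)
    (lb ub : ℕ → EReal)
    (v : ℕ → ℤ) (hv : MemProp.RespectsBounds lb ub v)
    (hmem : MemProp.MemHolds x y v) :
    ∀ i : Fin k,
      max (lb (x i))
          (sInf {e : EReal | ∃ j : Fin l, MemProp.Match lb ub x (y j) ∧ e = lb (y j i)})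
        ≤ ((v (x i) : ℝ) : EReal) ∧
      ((v (x i) : ℝ) : EReal) ≤
        min (ub (x i))
          (sSup {e : EReal | ∃ j : Fin l, MemProp.Match lb ub x (y j) ∧ e = ub (y j i)}) := by
  intro i
  obtain ⟨j, hj⟩ := hmem
  -- the tuple `y j` realising the constraint is one of the matching tuples
  have hmatch := hv.match hj
  obtain ⟨hlx, hux⟩ := hv (x i)
  obtain ⟨hly, huy⟩ := hj i ▸ hv (y j i)
  refine ⟨max_le hlx ((sInf_le ?_).trans hly), le_min hux (huy.trans (le_sSup ?_))⟩ <;>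
    exact ⟨j, hmatch, rfl⟩

/-- Soundness of membership bounds propagation: if the
integer assignment `v` satisfies the membership constraint
`(x₁,...,x_k) ∈ {y₁,...,y_l}` and respects the bounds `lb`, `ub`
(valued in ℤ ∪ {±∞}), then for each `i`,
`v (x i) ≥ max (lb (x i)) (min {lb (y j i) : match(x, y j)})` and
`v (x i) ≤ min (ub (x i)) (max {ub (y j i) : match(x, y j)})`. -/
theorem membership_bounds_propagation_sound
    (k l : ℕ) (x : Fin k → ℕ) (y : Fin l → Fin k → ℕ)
    (lb ub : ℕ → EReal) (hlb : MemProp.IntBounds lb) (hub : MemProp.IntBounds ub)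
    (v : ℕ → ℤ) (hv : MemProp.RespectsBounds lb ub v)
    (hmem : MemProp.MemHolds x y v) :
    ∀ i : Fin k,
      max (lb (x i))
          (sInf {e : EReal | ∃ j : Fin l, MemProp.Match lb ub x (y j) ∧ e = lb (y j i)})
        ≤ ((v (x i) : ℝ) : EReal) ∧
      ((v (x i) : ℝ) : EReal) ≤
        min (ub (x i))
          (sSup {e : EReal | ∃ j : Fin l, MemProp.Match lb ub x (y j) ∧ e = ub (y j i)}) :=
  membership_bounds_propagation_sound_general k l x y lb ub v hv hmem
end

section
/- If exactly one index j ∈ [1,l] satisfies match(x, y_j) under given bounds lb, ub, then every integer assignment v respecting the bounds and satisfying the membership constraint (x1,...,xk) ∈ {y_1,...,y_l} must satisfy v(x_i) = v(y_{j,i}) for all i ∈ [1,k]. If no index j satisfies match(x, y_j), then no assignment respecting the bounds satisfies the membership constraint. -/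
/-!
Any witness `j` of the membership constraint is a matching index, because the common value
`v (x i) = v (y j i)` lies in both bound intervals. So a unique matching index is the only
possible witness, and when no index matches there is no witness at all.
-/

namespace MemProp

theorem Match.of_respectsBounds {k : ℕ} {lb ub : ℕ → EReal} {v : ℕ → ℤ}
    (hv : RespectsBounds lb ub v) {x y : Fin k → ℕ} (h : ∀ i, v (x i) = v (y i)) :
    Match lb ub x y := fun i =>
  (max_le (hv _).1 (h i ▸ (hv _).1)).trans (le_min (hv _).2 (h i ▸ (hv _).2))

end MemProp

/-- If exactly one index `j` satisfies `match(x, y j)` under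
the given bounds, then every integer assignment respecting the bounds and
satisfying the membership constraint `(x₁,...,x_k) ∈ {y₁,...,y_l}` must set
`v (x i) = v (y j i)` for all `i`; and if no index matches, no assignment
respecting the bounds satisfies the membership constraint. -/
theorem membership_match_unique_or_empty
    (k l : ℕ) (x : Fin k → ℕ) (y : Fin l → Fin k → ℕ) (lb ub : ℕ → EReal) :
    (∀ j : Fin l, MemProp.Match lb ub x (y j) →
        (∀ j' : Fin l, MemProp.Match lb ub x (y j') → j' = j) →
        ∀ v : ℕ → ℤ, MemProp.RespectsBounds lb ub v → MemProp.MemHolds x y v →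
          ∀ i : Fin k, v (x i) = v (y j i)) ∧
    ((∀ j : Fin l, ¬ MemProp.Match lb ub x (y j)) →
        ∀ v : ℕ → ℤ, MemProp.RespectsBounds lb ub v → ¬ MemProp.MemHolds x y v) := by
  constructor
  · rintro j - huniq v hv ⟨j', hj'⟩
    obtain rfl := huniq j' (.of_respectsBounds hv hj')
    exact hj'
  · rintro hnone v hv ⟨j, hj⟩
    exact hnone j (.of_respectsBounds hv hj)
end
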